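/- Fix k ≥ 1 and let δ : I × S → S with initial state s0. Suppose P : S → Prop satisfies: (base) P holds for all states reached within the first k steps from s0 (for every input sequence); and (step) for every y ∈ S and every input sequence x1,...,xk, if P holds at each of the k consecutive states of the run of δ from y on x1,...,xk, then P holds at the (k+1)-th state. Then P holds at every reachable state of δ from s0. -/

import Mathlib

/-- State after feeding a list of inputs. -/
def nextState {I S : Type} (δ : I → S → S) (s : S) (xs : List I) : S :=
  xs.foldl (fun s x => δ x s) s

/-- Output sequence of a Mealy machine on a list of inputs. -/
def outputs {I S O : Type} (δ : I → S → S) (lam : I → S → O) : S → List I → List O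
  | _, [] => []
  | s, x :: xs => lam x s :: outputs δ lam (δ x s) xs

/-- A state is reachable from `s0` if some finite input sequence drives the machine to it. -/
def Reachable {I S : Type} (δ : I → S → S) (s0 s : S) : Prop :=
  ∃ xs : List I, nextState δ s0 xs = s

/-- Trajectory (run) of the transition function from `y` under the input stream `x`. -/
def traj {I S : Type} (δ : I → S → S) (x : ℕ → I) (y : S) : ℕ → S
  | 0 => y
  | i + 1 => δ (x i) (traj δ x y i)

/-! A run from `s0` is, after its first `i - k` steps, a run from an arbitrary state on the
shifted inputs, so the step hypothesis applies to every window of `k` consecutive states; an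
induction on ℕ whose step looks back over a window of length `k` then covers all positions. -/

theorem Nat.forall_of_window {Q : ℕ → Prop} (k : ℕ) (hbase : ∀ i < k, Q i)
    (hstep : ∀ m, (∀ j < k, Q (m + j)) → Q (m + k)) (n : ℕ) : Q n := by
  induction n using Nat.strong_induction_on with
  | _ n ih =>
    rcases lt_or_ge n k with hn | hn
    · exact hbase n hn
    · obtain ⟨m, rfl⟩ := Nat.exists_eq_add_of_le' hn
      exact hstep m fun j hj => ih (m + j) (by omega)

theorem traj_add {I S : Type} (δ : I → S → S) (x : ℕ → I) (y : S) (m n : ℕ) :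
    traj δ (fun j => x (m + j)) (traj δ x y m) n = traj δ x y (m + n) := by
  induction n with
  | zero => rfl
  | succ n ih => rw [← Nat.add_assoc]; simp only [traj, ih]

theorem stmt_5_general {I S : Type} (k : ℕ) (δ : I → S → S) (s0 : S) (P : S → Prop)
    (hbase : ∀ (x : ℕ → I) (i : ℕ), i < k → P (traj δ x s0 i))
    (hstep : ∀ (y : S) (x : ℕ → I),
      (∀ i < k, P (traj δ x y i)) → P (traj δ x y k)) :
    ∀ (x : ℕ → I) (i : ℕ), P (traj δ x s0 i) := by
  intro x
  refine Nat.forall_of_window k (hbase x) fun m hwindow => ?_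
  have h := hstep (traj δ x s0 m) (fun j => x (m + j))
  simp only [traj_add] at h
  exact h hwindow

theorem stmt_5 {I S : Type} (k : ℕ) (hk : 1 ≤ k) (δ : I → S → S) (s0 : S) (P : S → Prop)
    (hbase : ∀ (x : ℕ → I) (i : ℕ), i < k → P (traj δ x s0 i))
    (hstep : ∀ (y : S) (x : ℕ → I),
      (∀ i < k, P (traj δ x y i)) → P (traj δ x y k)) :
    ∀ (x : ℕ → I) (i : ℕ), P (traj δ x s0 i) :=
  stmt_5_general k δ s0 P hbase hstep
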